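/- Let k ∈ ℕ₀, let s be an odd natural number, and let M > 0. Then for every ε > 0 there exists a shallow tanh neural network Ψ : [−M, M] → ℝ^{(s+1)/2} of width (s+1)/2 such that for every odd p with p ≤ s, ‖f_p − Ψ_{(p+1)/2}‖_{W^{k,∞}([−M,M])} ≤ ε, where f_p(y) = y^p and Ψ_{(p+1)/2} denotes the ((p+1)/2)-th output component of Ψ. -/

import Mathlib

/-!
Take the `i`-th neuron to be `y ↦ tanh ((i + 1) h y)`, `0 ≤ i < (s + 1) / 2`, with output weights
`w i / h ^ p`. In the Taylor polynomial of order `s` of `tanh` at `0` the even coefficients vanish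
and the odd ones do not (by the Leibniz rule applied to `tanh' = 1 - tanh ^ 2` they alternate in
sign), so once the weights solve an odd-power Vandermonde system in the nodes `i + 1`, the Taylor
polynomial contributes exactly `y ^ p`. The error is then `O(h ^ (s + 1 - p)) = O(h)` in every
`C^k` norm on `[-M, M]`: its derivatives of order `> s` are `O(h)` directly, and those of order
`≤ s` vanish at `0` to the appropriate order, so iterating the mean value theorem transfers the
bound. A small `h` then works for all `p` at once.
-/

/-- Univariate `W^{k,∞}(S)` norm: `max_{m ≤ k} sup_{x ∈ S} |f^{(m)}(x)|`. -/
noncomputable def sobNorm1 (k : ℕ) (S : Set ℝ) (f : ℝ → ℝ) : ℝ :=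
  ⨆ p : {q : ℕ × ℝ // q.1 ≤ k ∧ q.2 ∈ S}, |iteratedDeriv p.1.1 f p.1.2|

/-- A shallow tanh neural network of width `m` from `ℝ` to `ℝ^q`:
`Ψ(x) = W₂ tanh(W₁ x + b₁) + b₂`. -/
def IsShallowTanh1 {q : ℕ} (m : ℕ) (Ψ : ℝ → Fin q → ℝ) : Prop :=
  ∃ (W₁ b₁ : Fin m → ℝ) (W₂ : Matrix (Fin q) (Fin m) ℝ) (b₂ : Fin q → ℝ),
    ∀ x j, Ψ x j = (∑ i, W₂ j i * Real.tanh (W₁ i * x + b₁ i)) + b₂ j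


open Real Set Finset Nat Filter Topology
open scoped ContDiff

theorem Function.Odd.iteratedDeriv_zero_eq_zero {f : ℝ → ℝ} (hf : f.Odd) {n : ℕ} (hn : Even n) :
    iteratedDeriv n f 0 = 0 := by
  have h := iteratedDeriv_comp_neg n f 0
  simp only [hf _, iteratedDeriv_fun_neg, hn.neg_one_pow, neg_zero, one_smul] at h
  linarith

theorem iteratedDeriv_iteratedDeriv {𝕜 F : Type*} [NontriviallyNormedField 𝕜]
    [NormedAddCommGroup F] [NormedSpace 𝕜 F] (i j : ℕ) (f : 𝕜 → F) :
    iteratedDeriv i (iteratedDeriv j f) = iteratedDeriv (i + j) f := by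
  simp only [iteratedDeriv_eq_iterate, Function.iterate_add_apply]

theorem iteratedDeriv_sum_mul_comp_mul {𝕜 ι : Type*} [NontriviallyNormedField 𝕜] (t : Finset ι)
    {σ : 𝕜 → 𝕜} {m : ℕ} (hσ : ContDiff 𝕜 m σ) (a b : ι → 𝕜) (x : 𝕜) :
    iteratedDeriv m (fun y => ∑ i ∈ t, a i * σ (b i * y)) x
      = ∑ i ∈ t, a i * b i ^ m * iteratedDeriv m σ (b i * x) := by
  rw [iteratedDeriv_fun_sum (f := fun i y => a i * σ (b i * y)) fun i _ => by fun_prop]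
  refine sum_congr rfl fun i _ => ?_
  rw [iteratedDeriv_const_mul_field, iteratedDeriv_comp_const_mul hσ, mul_assoc]

theorem abs_le_mul_pow_of_iteratedDeriv_eq_zero {K : ℕ} {g : ℝ → ℝ} {r C : ℝ}
    (hg : ContDiff ℝ K g) (hg0 : ∀ j < K, iteratedDeriv j g 0 = 0)
    (hC : ∀ z ∈ Icc (-r) r, |iteratedDeriv K g z| ≤ C) :
    ∀ z ∈ Icc (-r) r, |g z| ≤ C * |z| ^ K := by
  induction K generalizing g with
  | zero => simpa using hC
  | succ K ih =>
    obtain ⟨hdiff, -, hg'⟩ :=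
      (contDiff_succ_iff_deriv (n := (K : WithTop ℕ∞))).mp (by exact_mod_cast hg)
    have hg'_bound := ih hg' (fun j hj => by rw [← iteratedDeriv_succ']; exact hg0 _ (by omega))
      (fun z hz => by rw [← iteratedDeriv_succ']; exact hC z hz)
    intro z hz
    have hsub : uIcc 0 z ⊆ Icc (-r) r :=
      uIcc_subset_Icc ⟨by linarith [hz.1, hz.2], by linarith [hz.1, hz.2]⟩ hz
    have hderiv : ∀ t ∈ uIcc 0 z, ‖deriv g t‖ ≤ C * |z| ^ K := fun t ht =>
      calc |deriv g t| ≤ C * |t| ^ K := hg'_bound t (hsub ht)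
        _ ≤ C * |z| ^ K := by
          have hC0 := (abs_nonneg _).trans (hC z hz)
          have htz : |t| ≤ |z| := by simpa using abs_sub_left_of_mem_uIcc ht
          gcongr
    have hmvt := (convex_uIcc 0 z).norm_image_sub_le_of_norm_deriv_le (fun t _ => hdiff t)
      hderiv left_mem_uIcc right_mem_uIcc
    have hg00 : g 0 = 0 := by simpa using hg0 0 (by omega)
    simpa [hg00, pow_succ, mul_assoc] using hmvt

theorem sobNorm1_le {k : ℕ} {S : Set ℝ} (hS : S.Nonempty) {f : ℝ → ℝ} {ε : ℝ}
    (h : ∀ m ≤ k, ∀ x ∈ S, |iteratedDeriv m f x| ≤ ε) : sobNorm1 k S f ≤ ε :=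
  have : Nonempty {q : ℕ × ℝ // q.1 ≤ k ∧ q.2 ∈ S} := ⟨⟨(0, hS.some), k.zero_le, hS.some_mem⟩⟩
  ciSup_le fun q => h _ q.2.1 _ q.2.2

theorem exists_sum_mul_pow_odd_eq {K : Type*} [Field K] {n : ℕ} {c : Fin n → K}
    (hc0 : ∀ i, c i ≠ 0) (hc : Function.Injective fun i => c i ^ 2) (β : Fin n → K) :
    ∃ w : Fin n → K, ∀ r : Fin n, ∑ i, w i * c i ^ (2 * (r : ℕ) + 1) = β r := by
  set B : Matrix (Fin n) (Fin n) K := Matrix.diagonal c * Matrix.vandermonde fun i => c i ^ 2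
  have hB : IsUnit B := by
    rw [Matrix.isUnit_iff_isUnit_det, isUnit_iff_ne_zero, Matrix.det_mul, Matrix.det_diagonal]
    exact mul_ne_zero (prod_ne_zero_iff.mpr fun i _ => hc0 i)
      (Matrix.det_vandermonde_ne_zero_iff.mpr hc)
  obtain ⟨w, hw⟩ := Matrix.vecMul_surjective_iff_isUnit.mpr hB β
  refine ⟨w, fun r => ?_⟩
  rw [← hw]
  simp only [B, Matrix.vecMul, dotProduct, Matrix.diagonal_mul, Matrix.vandermonde_apply]
  exact sum_congr rfl fun i _ => by ring

/-- Equivalently, `∑ i, w i * T (c i * y) = y ^ p` for the Taylor polynomial `T` of order `s` of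
`σ` at `0`. -/
def ReproducesMonomial {ι : Type*} [Fintype ι] (σ : ℝ → ℝ) (w c : ι → ℝ) (p s : ℕ) : Prop :=
  ∀ j ≤ s, iteratedDeriv j σ 0 * ∑ i, w i * c i ^ j = if j = p then (p ! : ℝ) else 0

theorem exists_reproducesMonomial_of_odd {σ : ℝ → ℝ} (hσ : σ.Odd) {n : ℕ} {c : Fin n → ℝ}
    (hc0 : ∀ i, c i ≠ 0) (hc : Function.Injective fun i => c i ^ 2) (r : Fin n)
    (hr : iteratedDeriv (2 * r + 1) σ 0 ≠ 0) :
    ∃ w : Fin n → ℝ, ReproducesMonomial σ w c (2 * r + 1) (2 * n - 1) := by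
  obtain ⟨w, hw⟩ := exists_sum_mul_pow_odd_eq hc0 hc
    fun r' => if r' = r then ((2 * r + 1)! : ℝ) / iteratedDeriv (2 * r + 1) σ 0 else 0
  refine ⟨w, fun j hj => ?_⟩
  rcases Nat.even_or_odd' j with ⟨u, rfl | rfl⟩
  · rw [hσ.iteratedDeriv_zero_eq_zero (even_two_mul u), zero_mul, if_neg (by omega)]
  · rw [hw ⟨u, by omega⟩]
    by_cases hu : u = r
    · subst hu; simp [mul_div_cancel₀ _ hr]
    · simp [Fin.ext_iff, hu]

namespace Real

theorem hasDerivAt_tanh (x : ℝ) : HasDerivAt tanh (1 - tanh x ^ 2) x := by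
  have hc := (cosh_pos x).ne'
  have h : HasDerivAt (fun y => sinh y / cosh y)
      ((cosh x * cosh x - sinh x * sinh x) / cosh x ^ 2) x :=
    (hasDerivAt_sinh x).div (hasDerivAt_cosh x) hc
  rw [show tanh = fun x => sinh x / cosh x from funext tanh_eq_sinh_div_cosh]
  refine h.congr_deriv ?_
  field_simp

theorem deriv_tanh : deriv tanh = fun x => 1 - tanh x ^ 2 :=
  funext fun x => (hasDerivAt_tanh x).deriv

theorem contDiff_tanh {n : WithTop ℕ∞} : ContDiff ℝ n tanh := by
  rw [show tanh = fun x => sinh x / cosh x from funext tanh_eq_sinh_div_cosh]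
  exact contDiff_sinh.div contDiff_cosh fun x => (cosh_pos x).ne'

theorem iteratedDeriv_add_two_tanh (n : ℕ) (x : ℝ) :
    iteratedDeriv (n + 2) tanh x = -∑ i ∈ range (n + 2),
      ((n + 1).choose i : ℝ) * iteratedDeriv i tanh x * iteratedDeriv (n + 1 - i) tanh x := by
  rw [iteratedDeriv_succ', deriv_tanh, iteratedDeriv_const_sub n.succ_pos, iteratedDeriv_neg,
    show (fun x => tanh x ^ 2) = tanh * tanh by funext; simp [sq],
    iteratedDeriv_mul contDiff_tanh.contDiffAt contDiff_tanh.contDiffAt]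

theorem neg_one_pow_mul_iteratedDeriv_tanh_zero_pos {j : ℕ} (hj : Odd j) :
    0 < (-1) ^ (j / 2) * iteratedDeriv j tanh 0 := by
  induction j using Nat.strong_induction_on with
  | _ j ih =>
  obtain ⟨r, rfl⟩ := hj
  rcases r with _ | r
  · simp [deriv_tanh]
  set d := fun i => iteratedDeriv i tanh 0
  have hodd : ∀ i ≤ 2 * r + 2, Odd i → 0 < (-1) ^ r * (d i * d (2 * r + 2 - i)) := by
    rintro i hi ⟨u, rfl⟩
    have h1 := ih (2 * u + 1) (by omega) ⟨u, rfl⟩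
    have h2 := ih (2 * r + 2 - (2 * u + 1)) (by omega) ⟨r - u, by omega⟩
    rw [show (2 * u + 1) / 2 = u by omega] at h1
    rw [show (2 * r + 2 - (2 * u + 1)) / 2 = r - u by omega] at h2
    rw [show (-1 : ℝ) ^ r = (-1) ^ u * (-1) ^ (r - u) by
      rw [← pow_add, Nat.add_sub_cancel' (by omega)]]
    calc (0 : ℝ) < ((-1) ^ u * d (2 * u + 1)) * ((-1) ^ (r - u) * d (2 * r + 2 - (2 * u + 1))) :=
          mul_pos h1 h2
      _ = _ := by ring
  rw [show 2 * (r + 1) + 1 = 2 * r + 1 + 2 by ring, iteratedDeriv_add_two_tanh,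
    show (2 * r + 1 + 2) / 2 = r + 1 by omega, pow_succ, mul_neg_one, neg_mul_neg, mul_sum]
  refine sum_pos' (fun i hi => ?_) ⟨1, by simp, ?_⟩
  · rcases Nat.even_or_odd i with he | ho
    · simp [Function.Odd.iteratedDeriv_zero_eq_zero (f := tanh) tanh_neg he]
    · have := hodd i (by simp at hi; omega) ho
      rw [show 2 * r + 1 + 1 - i = 2 * r + 2 - i by omega]
      calc (0 : ℝ) ≤ ((2 * r + 1 + 1).choose i : ℝ) * ((-1) ^ r * (d i * d (2 * r + 2 - i))) :=
            mul_nonneg (Nat.cast_nonneg _) this.le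
        _ = _ := by ring
  · have := hodd 1 (by omega) odd_one
    rw [show 2 * r + 1 + 1 - 1 = 2 * r + 2 - 1 by omega]
    calc (0 : ℝ) < ((2 * r + 1 + 1).choose 1 : ℝ) * ((-1) ^ r * (d 1 * d (2 * r + 2 - 1))) :=
          mul_pos (by simp; positivity) this
      _ = _ := by ring

theorem iteratedDeriv_tanh_zero_ne_zero {j : ℕ} (hj : Odd j) : iteratedDeriv j tanh 0 ≠ 0 :=
  right_ne_zero_of_mul (neg_one_pow_mul_iteratedDeriv_tanh_zero_pos hj).ne'

end Real

noncomputable def scaledNetwork {ι : Type*} [Fintype ι] (σ : ℝ → ℝ) (w c : ι → ℝ) (p : ℕ)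
    (h y : ℝ) : ℝ :=
  ∑ i, w i / h ^ p * σ (c i * h * y)

section ScaledNetwork

variable {ι : Type*} [Fintype ι] {σ : ℝ → ℝ} {w c : ι → ℝ} {p : ℕ}

theorem contDiff_pow_sub_scaledNetwork (hσ : ContDiff ℝ ∞ σ) (h : ℝ) :
    ContDiff ℝ ∞ fun y => y ^ p - scaledNetwork σ w c p h y := by
  unfold scaledNetwork
  fun_prop

theorem iteratedDeriv_pow_sub_scaledNetwork (hσ : ContDiff ℝ ∞ σ) (j : ℕ) (h y : ℝ) :
    iteratedDeriv j (fun y => y ^ p - scaledNetwork σ w c p h y) y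
      = p.descFactorial j * y ^ (p - j)
        - ∑ i, w i / h ^ p * (c i * h) ^ j * iteratedDeriv j σ (c i * h * y) := by
  have hσj : ContDiff ℝ j σ := hσ.of_le (WithTop.coe_le_coe.mpr le_top)
  unfold scaledNetwork
  rw [iteratedDeriv_fun_sub (by fun_prop) (by fun_prop), iteratedDeriv_pow,
    iteratedDeriv_sum_mul_comp_mul _ hσj]

theorem iteratedDeriv_pow_sub_scaledNetwork_zero (hσ : ContDiff ℝ ∞ σ) {s : ℕ}
    (hw : ReproducesMonomial σ w c p s) {h : ℝ} (hh : h ≠ 0) {j : ℕ} (hj : j ≤ s) :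
    iteratedDeriv j (fun y => y ^ p - scaledNetwork σ w c p h y) 0 = 0 := by
  have hsum : ∑ i, w i / h ^ p * (c i * h) ^ j * iteratedDeriv j σ (c i * h * 0)
      = h ^ j / h ^ p * (iteratedDeriv j σ 0 * ∑ i, w i * c i ^ j) := by
    simp only [mul_zero, mul_sum]
    exact sum_congr rfl fun i _ => by ring
  rw [iteratedDeriv_pow_sub_scaledNetwork hσ, hsum, hw j hj]
  split_ifs with hjp
  · subst hjp; simp [hh, Nat.descFactorial_self]
  · simp [Nat.descFactorial_eq_zero_iff_lt]
    omega

theorem abs_iteratedDeriv_pow_sub_scaledNetwork_le (hσ : ContDiff ℝ ∞ σ) {j : ℕ} (hpj : p < j)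
    {R B : ℝ} (hB : ∀ z ∈ Icc (-R) R, |iteratedDeriv j σ z| ≤ B) {M : ℝ}
    (hR : ∀ i, |c i| * M ≤ R) {h : ℝ} (hh0 : 0 < h) (hh1 : h ≤ 1) {y : ℝ} (hy : y ∈ Icc (-M) M) :
    |iteratedDeriv j (fun y => y ^ p - scaledNetwork σ w c p h y) y|
      ≤ (∑ i, |w i| * |c i| ^ j) * B * h := by
  rw [iteratedDeriv_pow_sub_scaledNetwork hσ, Nat.descFactorial_eq_zero_iff_lt.mpr hpj,
    Nat.cast_zero, zero_mul, zero_sub, abs_neg, sum_mul, sum_mul]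
  refine (abs_sum_le_sum_abs _ _).trans (sum_le_sum fun i _ => ?_)
  have hz : |c i * h * y| ≤ R :=
    calc |c i * h * y| = |c i| * (h * |y|) := by rw [abs_mul, abs_mul, abs_of_pos hh0, mul_assoc]
      _ ≤ |c i| * M := by
        gcongr
        exact (mul_le_of_le_one_left (abs_nonneg y) hh1).trans
          (abs_le.mpr ⟨by linarith [hy.1], hy.2⟩)
      _ ≤ R := hR i
  have hσz := hB _ (abs_le.mp hz)
  calc |w i / h ^ p * (c i * h) ^ j * iteratedDeriv j σ (c i * h * y)|
      = |w i| * |c i| ^ j * (|iteratedDeriv j σ (c i * h * y)| * h ^ (j - p)) := by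
        rw [pow_sub₀ h hh0.ne' hpj.le, abs_mul, abs_mul, abs_div, mul_pow, abs_mul,
          abs_of_pos (pow_pos hh0 j), abs_of_pos (pow_pos hh0 p), abs_pow]
        ring
    _ ≤ |w i| * |c i| ^ j * (B * h) := by
        refine mul_le_mul_of_nonneg_left ?_ (by positivity)
        exact mul_le_mul hσz (pow_le_of_le_one hh0.le hh1 (Nat.sub_pos_of_lt hpj).ne')
          (by positivity) ((abs_nonneg _).trans hσz)
    _ = |w i| * |c i| ^ j * B * h := by ring

theorem exists_abs_iteratedDeriv_pow_sub_scaledNetwork_le (hσ : ContDiff ℝ ∞ σ) {s : ℕ}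
    (hw : ReproducesMonomial σ w c p s) (hps : p ≤ s) (m : ℕ) (M : ℝ) :
    ∃ C, ∀ h, 0 < h → h ≤ 1 → ∀ y ∈ Icc (-M) M,
      |iteratedDeriv m (fun y => y ^ p - scaledNetwork σ w c p h y) y| ≤ C * h := by
  set N := max m (s + 1)
  set R := (∑ i, |c i|) * M
  obtain ⟨B, hB⟩ := isCompact_Icc.exists_bound_of_continuousOn (s := Icc (-R) R)
    (hσ.continuous_iteratedDeriv N (WithTop.coe_le_coe.mpr le_top)).continuousOn
  refine ⟨(∑ i, |w i| * |c i| ^ N) * B * M ^ (N - m), fun h hh0 hh1 y hy => ?_⟩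
  have hM : 0 ≤ M := by linarith [hy.1, hy.2]
  have hR : ∀ i, |c i| * M ≤ R := fun i =>
    mul_le_mul_of_nonneg_right (single_le_sum (fun i _ => abs_nonneg (c i)) (mem_univ i)) hM
  have hN := fun z (hz : z ∈ Icc (-M) M) =>
    abs_iteratedDeriv_pow_sub_scaledNetwork_le (w := w) (p := p) hσ (j := N) (by omega) hB hR
      hh0 hh1 hz
  have hsmooth : ContDiff ℝ (N - m : ℕ)
      (iteratedDeriv m fun y => y ^ p - scaledNetwork σ w c p h y) := by
    rw [iteratedDeriv_eq_iterate]
    exact ((contDiff_pow_sub_scaledNetwork hσ h).iterate_deriv m).of_le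
      (WithTop.coe_le_coe.mpr le_top)
  have hy' := abs_le_mul_pow_of_iteratedDeriv_eq_zero hsmooth
    (fun j hj => by
      rw [iteratedDeriv_iteratedDeriv]
      exact iteratedDeriv_pow_sub_scaledNetwork_zero hσ hw hh0.ne' (by omega))
    (fun z hz => by
      rw [iteratedDeriv_iteratedDeriv, Nat.sub_add_cancel (le_max_left _ _)]
      exact hN z hz) y hy
  have hC0 := (abs_nonneg _).trans (hN y hy)
  calc _ ≤ (∑ i, |w i| * |c i| ^ N) * B * h * |y| ^ (N - m) := hy'
    _ ≤ (∑ i, |w i| * |c i| ^ N) * B * h * M ^ (N - m) := by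
        gcongr
        exact abs_le.mpr ⟨by linarith [hy.1], hy.2⟩
    _ = _ := by ring

theorem eventually_abs_iteratedDeriv_pow_sub_scaledNetwork_le (hσ : ContDiff ℝ ∞ σ) {s : ℕ}
    (hw : ReproducesMonomial σ w c p s) (hps : p ≤ s) (m : ℕ) (M : ℝ) {ε : ℝ} (hε : 0 < ε) :
    ∀ᶠ h in 𝓝[>] 0, ∀ y ∈ Icc (-M) M,
      |iteratedDeriv m (fun y => y ^ p - scaledNetwork σ w c p h y) y| ≤ ε := by
  obtain ⟨C, hC⟩ := exists_abs_iteratedDeriv_pow_sub_scaledNetwork_le hσ hw hps m M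
  have hlim : Tendsto (fun h => C * h) (𝓝[>] 0) (𝓝 0) := by
    simpa using (tendsto_id.const_mul C).mono_left (nhdsWithin_le_nhds (a := (0 : ℝ)))
  filter_upwards [Ioc_mem_nhdsGT one_pos, hlim.eventually (ge_mem_nhds hε)] with h hh hCh y hy
  exact (hC h hh.1 hh.2 y hy).trans hCh

end ScaledNetwork

/-- **Lemma 3.1.** For `k ∈ ℕ₀`, odd `s` and `M > 0`: for every `ε > 0` there is a shallow
tanh neural network `Ψ : [-M,M] → ℝ^{(s+1)/2}` of width `(s+1)/2` such that for every odd
`p ≤ s`, `‖y ↦ y^p - Ψ_{(p+1)/2}(y)‖_{W^{k,∞}([-M,M])} ≤ ε`. -/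
theorem shallow_tanh_approx_odd_monomials (k s : ℕ) (hs : s % 2 = 1)
    (M : ℝ) (hM : 0 < M) (ε : ℝ) (hε : 0 < ε) :
    ∃ Ψ : ℝ → Fin ((s + 1) / 2) → ℝ, IsShallowTanh1 ((s + 1) / 2) Ψ ∧
      ∀ (p : ℕ) (hp : p ≤ s) (hodd : p % 2 = 1),
        sobNorm1 k (Set.Icc (-M) M) (fun y => y ^ p - Ψ y ⟨p / 2, by omega⟩) ≤ ε := by
  set n := (s + 1) / 2
  set c : Fin n → ℝ := fun i => (i : ℝ) + 1
  have hc : Function.Injective fun i => c i ^ 2 := fun i j hij =>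
    Fin.ext (by simpa [c] using (sq_eq_sq₀ (by positivity) (by positivity)).mp hij)
  choose w hw using fun r : Fin n => exists_reproducesMonomial_of_odd (σ := tanh) tanh_neg
    (fun i => by positivity) hc r (iteratedDeriv_tanh_zero_ne_zero ⟨r, rfl⟩)
  rw [show 2 * n - 1 = s by omega] at hw
  have hsmall : ∀ᶠ h in 𝓝[>] 0, ∀ r : Fin n, ∀ m ∈ Set.Iic k, ∀ y ∈ Icc (-M) M,
      |iteratedDeriv m
        (fun y => y ^ (2 * (r : ℕ) + 1) - scaledNetwork tanh (w r) c (2 * r + 1) h y) y| ≤ ε :=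
    eventually_all.2 fun r => (eventually_all_finite (finite_Iic k)).2 fun m _ =>
      eventually_abs_iteratedDeriv_pow_sub_scaledNetwork_le contDiff_tanh (hw r) (by omega) m M hε
  obtain ⟨h, hbound⟩ := hsmall.exists
  refine ⟨fun y r => scaledNetwork tanh (w r) c (2 * r + 1) h y,
    ⟨fun i => c i * h, 0, Matrix.of fun r i => w r i / h ^ (2 * (r : ℕ) + 1), 0,
      fun x r => by simp only [scaledNetwork, Matrix.of_apply, Pi.zero_apply, add_zero]; rfl⟩,
    fun p hp hodd => ?_⟩
  obtain ⟨r, rfl⟩ : ∃ r, p = 2 * r + 1 := ⟨p / 2, by omega⟩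
  have hr : (2 * r + 1) / 2 = r := by omega
  simp only [hr]
  exact sobNorm1_le ⟨0, by constructor <;> linarith⟩ fun m hm => hbound ⟨r, by omega⟩ m hm
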